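/- arXiv:math/0202172 — 2 statements merged into one kernel-verified Lean document; each statement's English description precedes it below -/
import Mathlib

section
/- Let X be a connected, locally finite, infinite graph and F a subset of vertices such that X is self-similar with respect to F (no two vertices of F are adjacent in X, the closures of two distinct connected components of V(X)\F intersect in at most one vertex, and X is isomorphic to the reduced graph X_F). Then for any m-cell C (a connected component of V(X)\F^m) and any n-cell D with (m,n,C) ≠ (n,m,D), the intersection of the boundaries θC ∩ θD contains at most one vertex. -/
open SimpleGraph Set

variable {V : Type*}

/-- The vertex boundary of a set of vertices. -/
def vBdry (X : SimpleGraph V) (C : Set V) : Set V :=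
  {v | v ∉ C ∧ ∃ c ∈ C, X.Adj v c}

/-- The closure of a set of vertices. -/
def vClosure (X : SimpleGraph V) (C : Set V) : Set V :=
  C ∪ vBdry X C

/-- `C` is a connected component of `V X \ F`. -/
def IsCell (X : SimpleGraph V) (F : Set V) (C : Set V) : Prop :=
  ∃ v : ↥(Fᶜ), C = Subtype.val '' ((X.induce Fᶜ).connectedComponentMk v).supp

/-- The reduced graph `X_F` on vertex set `F`. -/
def reducedGraph (X : SimpleGraph V) (F : Set V) : SimpleGraph F where
  Adj x y := x ≠ y ∧ ∃ C, IsCell X F C ∧ (x : V) ∈ vBdry X C ∧ (y : V) ∈ vBdry X C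
  symm := ⟨fun x y ⟨h, C, hC, hx, hy⟩ => ⟨h.symm, C, hC, hy, hx⟩⟩
  loopless := ⟨fun x h => h.1 rfl⟩

/-- Self-similarity of `X` with respect to `F` and the isomorphism `ψ : X → X_F`:
axioms (F1) and (F2); axiom (F3) is the existence of `ψ` itself. -/
structure IsSelfSimilar (X : SimpleGraph V) (F : Set V) (ψ : X ≃g reducedGraph X F) : Prop where
  f1 : ∀ x ∈ F, ∀ y ∈ F, ¬ X.Adj x y
  f2 : ∀ C D, IsCell X F C → IsCell X F D → C ≠ D →
    (vClosure X C ∩ vClosure X D).Subsingleton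

/-- The self-similarity map `ψ` viewed as a self-map of the vertex set. -/
def psiMap (X : SimpleGraph V) (F : Set V) (ψ : X ≃g reducedGraph X F) : V → V :=
  fun v => ((ψ v : F) : V)

/-- `F^n = ψ^n F` (with `F^0 = V X`). -/
def Fiter (X : SimpleGraph V) (F : Set V) (ψ : X ≃g reducedGraph X F) (n : ℕ) : Set V :=
  Set.range ((psiMap X F ψ)^[n])

/-!
For `B ⊆ F`, two vertices of `F` are joined by a walk of `X` avoiding `B` iff they are joined by
such a walk in `X_F`: cutting a walk of `X` at its vertices in `F`, consecutive ones lie on the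
boundary of a single 1-cell and so are adjacent in `X_F`. An `X`-cell outside `B` meeting `F` also
has the same boundary as the corresponding `X_F`-cell. Pulled back along `ψ`, a `(k+1)`-cell `D`
meeting `F` thus comes from the `k`-cell `ψ⁻¹ D`, with `θD = ψ(θ(ψ⁻¹ D))`, while a cell missing
`F` is a 1-cell with boundary in `F²`, which has at most one vertex by (F1). Induction on the level
bounds `θC ∩ θD` for distinct cells of one level and `θC ∩ F^{m+1}` for an `m`-cell `C`. If
`m < n`, the `m`-cell `C` lies in an `n`-cell `D₀`; either `D₀ = D` and `θC ∩ θD ⊆ θC ∩ F^{m+1}`,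
or `θC ∩ θD ⊆ θD₀ ∩ θD`.
-/

open Function

def ReachableOutside (X : SimpleGraph V) (B : Set V) (x y : V) : Prop :=
  ∃ w : X.Walk x y, ∀ v ∈ w.support, v ∉ B

namespace ReachableOutside

variable {W : Type*} {X : SimpleGraph V} {Y : SimpleGraph W} {B B' : Set V} {x y z : V}

lemma refl (hx : x ∉ B) : ReachableOutside X B x x :=
  ⟨.nil, by simpa using hx⟩

lemma symm (h : ReachableOutside X B x y) : ReachableOutside X B y x := by
  obtain ⟨w, hw⟩ := h
  exact ⟨w.reverse, fun v hv => hw v (by simpa using hv)⟩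

lemma trans (h : ReachableOutside X B x y) (h' : ReachableOutside X B y z) :
    ReachableOutside X B x z := by
  obtain ⟨w, hw⟩ := h
  obtain ⟨w', hw'⟩ := h'
  exact ⟨w.append w', fun v hv => ((w.mem_support_append_iff w').1 hv).elim (hw v) (hw' v)⟩

lemma of_adj (h : X.Adj x y) (hx : x ∉ B) (hy : y ∉ B) : ReachableOutside X B x y :=
  ⟨.cons h .nil, by simp [hx, hy]⟩

lemma left_notMem (h : ReachableOutside X B x y) : x ∉ B := by
  obtain ⟨w, hw⟩ := h
  exact hw x w.start_mem_support

lemma right_notMem (h : ReachableOutside X B x y) : y ∉ B :=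
  h.symm.left_notMem

lemma mono (hB : B' ⊆ B) (h : ReachableOutside X B x y) : ReachableOutside X B' x y := by
  obtain ⟨w, hw⟩ := h
  exact ⟨w, fun v hv hvB => hw v hv (hB hvB)⟩

lemma map (f : X →g Y) {T : Set W} (h : ReachableOutside X (f ⁻¹' T) x y) :
    ReachableOutside Y T (f x) (f y) := by
  obtain ⟨w, hw⟩ := h
  refine ⟨w.map f, fun v hv => ?_⟩
  obtain ⟨u, hu, rfl⟩ := List.mem_map.1 (Walk.support_map f w ▸ hv)
  exact hw u hu

lemma iso_iff (e : X ≃g Y) {T : Set W} :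
    ReachableOutside Y T (e x) (e y) ↔ ReachableOutside X (e ⁻¹' T) x y := by
  refine ⟨fun h => ?_, map e.toHom⟩
  have : ReachableOutside X (e ⁻¹' T) (e.symm (e x)) (e.symm (e y)) :=
    map e.symm.toHom (by simpa [preimage_preimage] using h)
  simpa using this

end ReachableOutside

section Cells

variable {W : Type*} {X : SimpleGraph V} {B B' C D : Set V} {x y : V}

lemma reachable_induce_compl_iff {u v : ↥Bᶜ} :
    (X.induce Bᶜ).Reachable u v ↔ ReachableOutside X B u v := by
  constructor
  · rintro ⟨w⟩
    refine ⟨w.map (Embedding.induce Bᶜ).toHom, fun v hv => ?_⟩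
    obtain ⟨u, -, rfl⟩ := List.mem_map.1 (Walk.support_map _ w ▸ hv)
    exact u.2
  · rintro ⟨w, hw⟩
    exact ⟨w.induce Bᶜ hw⟩

lemma isCell_iff : IsCell X B C ↔ ∃ x, x ∉ B ∧ C = {y | ReachableOutside X B x y} := by
  have supp_eq (v : ↥Bᶜ) : Subtype.val '' ((X.induce Bᶜ).connectedComponentMk v).supp =
      {y | ReachableOutside X B v y} := by
    ext y
    simp only [mem_image, ConnectedComponent.mem_supp_iff, ConnectedComponent.eq, mem_ofPred_eq]
    constructor
    · rintro ⟨u, hu, rfl⟩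
      exact (reachable_induce_compl_iff.1 hu).symm
    · intro h
      exact ⟨⟨y, h.right_notMem⟩, reachable_induce_compl_iff.2 h.symm, rfl⟩
  constructor
  · rintro ⟨v, rfl⟩
    exact ⟨v, v.2, supp_eq v⟩
  · rintro ⟨x, hx, rfl⟩
    exact ⟨⟨x, hx⟩, (supp_eq ⟨x, hx⟩).symm⟩

lemma exists_isCell (hx : x ∉ B) : ∃ C, IsCell X B C ∧ x ∈ C :=
  ⟨_, isCell_iff.2 ⟨x, hx, rfl⟩, .refl hx⟩

namespace IsCell

lemma nonempty (hC : IsCell X B C) : C.Nonempty := by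
  obtain ⟨x, hx, rfl⟩ := isCell_iff.1 hC
  exact ⟨x, .refl hx⟩

lemma mem_iff (hC : IsCell X B C) (hx : x ∈ C) : y ∈ C ↔ ReachableOutside X B x y := by
  obtain ⟨z, -, rfl⟩ := isCell_iff.1 hC
  exact ⟨hx.symm.trans, hx.trans⟩

lemma notMem (hC : IsCell X B C) (hx : x ∈ C) : x ∉ B :=
  ((hC.mem_iff hx).1 hx).left_notMem

lemma eq_of_mem (hC : IsCell X B C) (hD : IsCell X B D) (hxC : x ∈ C) (hxD : x ∈ D) :
    C = D := by
  ext y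
  rw [hC.mem_iff hxC, hD.mem_iff hxD]

lemma subset_of_mem (hBB' : B ⊆ B') (hC : IsCell X B' C) (hD : IsCell X B D) (hxC : x ∈ C)
    (hxD : x ∈ D) : C ⊆ D :=
  fun _ hy => (hD.mem_iff hxD).2 (((hC.mem_iff hxC).1 hy).mono hBB')

lemma exists_superset (hBB' : B ⊆ B') (hC : IsCell X B' C) : ∃ D, IsCell X B D ∧ C ⊆ D := by
  obtain ⟨x, hx⟩ := hC.nonempty
  obtain ⟨D, hD, hxD⟩ := exists_isCell (X := X) fun h => hC.notMem hx (hBB' h)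
  exact ⟨D, hD, hC.subset_of_mem hBB' hD hx hxD⟩

lemma vBdry_subset (hC : IsCell X B C) : vBdry X C ⊆ B := by
  rintro v ⟨hvC, c, hc, hvc⟩
  by_contra hvB
  exact hvC ((hC.mem_iff hc).2 (.of_adj hvc.symm (hC.notMem hc) hvB))

lemma support_subset (hC : IsCell X B C) (hx : x ∈ C) (w : X.Walk x y)
    (hw : ∀ v ∈ w.support, v ∉ B) : ∀ v ∈ w.support, v ∈ C := by
  classical
  exact fun v hv => (hC.mem_iff hx).2
    ⟨w.takeUntil v hv, fun u hu => hw u (w.support_takeUntil_subset_support hv hu)⟩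

lemma of_disjoint (hBB' : B ⊆ B') (hC : IsCell X B C) (hCB' : Disjoint C B') :
    IsCell X B' C := by
  obtain ⟨x, hx⟩ := hC.nonempty
  refine isCell_iff.2 ⟨x, hCB'.notMem_of_mem_left hx, ?_⟩
  ext y
  refine ⟨fun hy => ?_, fun h => (hC.mem_iff hx).2 (h.mono hBB')⟩
  obtain ⟨w, hw⟩ := (hC.mem_iff hx).1 hy
  exact ⟨w, fun v hv => hCB'.notMem_of_mem_left (hC.support_subset hx w hw v hv)⟩

end IsCell

lemma mem_vBdry_of_subset {v : V} (hCD : C ⊆ D) (hv : v ∈ vBdry X C) (hvD : v ∉ D) :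
    v ∈ vBdry X D := by
  obtain ⟨-, c, hc, hvc⟩ := hv
  exact ⟨hvD, c, hCD hc, hvc⟩

lemma vBdry_preimage {Y : SimpleGraph W} (e : X ≃g Y) (C : Set W) :
    vBdry X (e ⁻¹' C) = e ⁻¹' vBdry Y C := by
  ext v
  simp only [vBdry, mem_preimage, mem_ofPred_eq]
  refine and_congr_right fun _ => ⟨fun ⟨c, hc, hvc⟩ => ⟨e c, hc, e.map_adj_iff.2 hvc⟩, ?_⟩
  rintro ⟨c, hc, hvc⟩
  obtain ⟨c, rfl⟩ := e.surjective c
  exact ⟨c, hc, e.map_adj_iff.1 hvc⟩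

end Cells

section ReducedGraph

variable {X : SimpleGraph V} {F B D E : Set V}

lemma reachableOutside_reducedGraph_of_mem_vBdry (hE : IsCell X F E) {u v : F}
    (hu : (u : V) ∈ vBdry X E) (hv : (v : V) ∈ vBdry X E) (huB : (u : V) ∉ B)
    (hvB : (v : V) ∉ B) : ReachableOutside (reducedGraph X F) (Subtype.val ⁻¹' B) u v := by
  by_cases huv : u = v
  · subst huv
    exact .refl huB
  · exact .of_adj ⟨huv, E, hE, hu, hv⟩ huB hvB

lemma ReachableOutside.of_reducedGraph (hB : B ⊆ F) {u v : F}
    (h : ReachableOutside (reducedGraph X F) (Subtype.val ⁻¹' B) u v) :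
    ReachableOutside X B u v := by
  obtain ⟨w, hw⟩ := h
  induction w with
  | nil => exact .refl (hw _ (by simp))
  | @cons u b v hadj p ih =>
    obtain ⟨E, hE, ⟨-, c₁, hc₁, huc₁⟩, ⟨-, c₂, hc₂, hbc₂⟩⟩ := hadj.2
    have hEB : ∀ c ∈ E, c ∉ B := fun c hc hcB => hE.notMem hc (hB hcB)
    have hub : ReachableOutside X B u b :=
      ((ReachableOutside.of_adj huc₁ (hw u (by simp)) (hEB c₁ hc₁)).trans
        ((hE.mem_iff hc₁).1 hc₂ |>.mono hB)).trans
        (.of_adj hbc₂.symm (hEB c₂ hc₂) (hw b (by simp)))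
    exact hub.trans (ih fun z hz => hw z (by simp [hz]))

lemma reachableOutside_reducedGraph_of_walk (hF : ∀ x ∈ F, ∀ y ∈ F, ¬ X.Adj x y) {a y : V}
    (w : X.Walk a y) (hw : ∀ v ∈ w.support, v ∉ B) (hy : y ∈ F) (f : F)
    (hfB : (f : V) ∉ B) (hf : (f : V) = a ∨ ∃ E, IsCell X F E ∧ a ∈ E ∧ (f : V) ∈ vBdry X E) :
    ReachableOutside (reducedGraph X F) (Subtype.val ⁻¹' B) f ⟨y, hy⟩ := by
  induction w generalizing f with
  | nil =>
    rcases hf with rfl | ⟨E, hE, haE, -⟩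
    · exact .refl hfB
    · exact absurd hy (hE.notMem haE)
  | @cons a b y hab p ih =>
    have hbB : b ∉ B := hw b (by simp)
    specialize ih (fun v hv => hw v (by simp [hv])) hy
    rcases hf with rfl | ⟨E, hE, haE, hfE⟩
    · have hbF : b ∉ F := fun hbF => hF f f.2 b hbF hab
      obtain ⟨E, hE, hbE⟩ := exists_isCell (X := X) hbF
      exact ih f hfB (.inr ⟨E, hE, hbE, fun h => hE.notMem h f.2, b, hbE, hab⟩)
    by_cases hbF : b ∈ F
    · have hbE : b ∈ vBdry X E := ⟨fun h => hE.notMem h hbF, a, haE, hab.symm⟩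
      exact (reachableOutside_reducedGraph_of_mem_vBdry (v := ⟨b, hbF⟩) hE hfE hbE hfB hbB).trans
        (ih ⟨b, hbF⟩ hbB (.inl rfl))
    · exact ih f hfB (.inr ⟨E, hE, (hE.mem_iff haE).2 (.of_adj hab (hE.notMem haE) hbF), hfE⟩)

lemma reachableOutside_reducedGraph_iff (hF : ∀ x ∈ F, ∀ y ∈ F, ¬ X.Adj x y) (hB : B ⊆ F)
    {u v : F} :
    ReachableOutside (reducedGraph X F) (Subtype.val ⁻¹' B) u v ↔ ReachableOutside X B u v := by
  refine ⟨ReachableOutside.of_reducedGraph hB, fun ⟨w, hw⟩ => ?_⟩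
  exact reachableOutside_reducedGraph_of_walk hF w hw v.2 u (hw _ w.start_mem_support)
    (.inl rfl)

lemma IsCell.image_vBdry_reducedGraph (hF : ∀ x ∈ F, ∀ y ∈ F, ¬ X.Adj x y) (hB : B ⊆ F)
    (hD : IsCell X B D) (hDF : (D ∩ F).Nonempty) :
    Subtype.val '' vBdry (reducedGraph X F) (Subtype.val ⁻¹' D) = vBdry X D := by
  obtain ⟨x₀, hx₀D, hx₀F⟩ := hDF
  apply Subset.antisymm
  · rintro _ ⟨v, ⟨hvD, b, hbD, hvb⟩, rfl⟩
    obtain ⟨-, E, hE, ⟨-, c₁, hc₁E, hvc₁⟩, ⟨-, c₂, hc₂E, hbc₂⟩⟩ := hvb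
    have hc₂D : c₂ ∈ D :=
      (hD.mem_iff hbD).2 (.of_adj hbc₂ (hD.notMem hbD) fun h => hE.notMem hc₂E (hB h))
    exact ⟨hvD, c₁, hE.subset_of_mem hB hD hc₂E hc₂D hc₁E, hvc₁⟩
  · rintro v ⟨hvD, d, hdD, hvd⟩
    have hvF : v ∈ F := hB (hD.vBdry_subset ⟨hvD, d, hdD, hvd⟩)
    obtain ⟨E, hE, hdE⟩ := exists_isCell (X := X) fun hdF => hF v hvF d hdF hvd
    -- a walk inside `D` from `d` to `x₀ ∈ F` leaves the 1-cell `E` at a second boundary vertex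
    obtain ⟨w, hw⟩ := (hD.mem_iff hdD).1 hx₀D
    obtain ⟨⟨⟨c, g⟩, hcg⟩, hdart, hcE, hgE⟩ :=
      w.exists_boundary_dart E hdE fun h => hE.notMem h hx₀F
    have hgD : g ∈ D := hD.support_subset hdD w hw g (w.dart_snd_mem_support_of_mem_darts hdart)
    have hgF : g ∈ F := hE.vBdry_subset ⟨hgE, c, hcE, hcg.symm⟩
    refine ⟨⟨v, hvF⟩, ⟨hvD, ⟨g, hgF⟩, hgD, ?_, E, hE, ?_, hgE, c, hcE, hcg.symm⟩, rfl⟩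
    · rintro ⟨⟩
      exact hvD hgD
    · exact ⟨fun h => hE.notMem h hvF, d, hdE, hvd⟩

end ReducedGraph

section SelfSimilar

variable {X : SimpleGraph V} {F : Set V} {ψ : X ≃g reducedGraph X F} {B C D E : Set V} {k : ℕ}

lemma psiMap_injective : Injective (psiMap X F ψ) :=
  Subtype.val_injective.comp ψ.injective

lemma range_psiMap : range (psiMap X F ψ) = F := by
  change range (Subtype.val ∘ ψ) = F
  rw [range_comp, ψ.surjective.range_eq, image_univ, Subtype.range_coe]

lemma Fiter_succ (n : ℕ) : Fiter X F ψ (n + 1) = psiMap X F ψ '' Fiter X F ψ n := by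
  rw [Fiter, Fiter, iterate_succ', range_comp]

lemma Fiter_one : Fiter X F ψ 1 = F := by
  rw [Fiter_succ, Fiter, iterate_zero, range_id, image_univ, range_psiMap]

lemma Fiter_antitone : Antitone (Fiter X F ψ) :=
  antitone_nat_of_succ_le fun n => by
    rintro _ ⟨v, rfl⟩
    exact ⟨psiMap X F ψ v, (iterate_succ_apply _ n v).symm⟩

lemma Fiter_subset {n : ℕ} (hn : 1 ≤ n) : Fiter X F ψ n ⊆ F :=
  (Fiter_antitone hn).trans Fiter_one.subset

lemma IsCell.one_le {n : ℕ} (hC : IsCell X (Fiter X F ψ n) C) : 1 ≤ n := by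
  obtain ⟨x, hx⟩ := hC.nonempty
  rcases n with _ | n
  · exact absurd ⟨x, rfl⟩ (hC.notMem hx)
  · exact n.succ_pos

lemma reachableOutside_psiMap_iff (hF : ∀ x ∈ F, ∀ y ∈ F, ¬ X.Adj x y) (hB : B ⊆ F) {x y : V} :
    ReachableOutside X B (psiMap X F ψ x) (psiMap X F ψ y) ↔
      ReachableOutside X (psiMap X F ψ ⁻¹' B) x y :=
  (reachableOutside_reducedGraph_iff hF hB).symm.trans (ReachableOutside.iso_iff ψ)

lemma IsCell.isCell_preimage_psiMap (hF : ∀ x ∈ F, ∀ y ∈ F, ¬ X.Adj x y)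
    (hD : IsCell X (Fiter X F ψ (k + 1)) D) {x : V} (hx : psiMap X F ψ x ∈ D) :
    IsCell X (Fiter X F ψ k) (psiMap X F ψ ⁻¹' D) := by
  have hpre : psiMap X F ψ ⁻¹' Fiter X F ψ (k + 1) = Fiter X F ψ k := by
    rw [Fiter_succ, psiMap_injective.preimage_image]
  have hreach {y z : V} : ReachableOutside X (Fiter X F ψ (k + 1)) (psiMap X F ψ y)
      (psiMap X F ψ z) ↔ ReachableOutside X (Fiter X F ψ k) y z := by
    rw [reachableOutside_psiMap_iff hF (Fiter_subset k.succ_pos), hpre]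
  refine isCell_iff.2 ⟨x, (hreach.1 (.refl (hD.notMem hx))).left_notMem, ?_⟩
  ext y
  rw [mem_preimage, hD.mem_iff hx, hreach, mem_ofPred_eq]

lemma IsCell.vBdry_eq_image_psiMap (hF : ∀ x ∈ F, ∀ y ∈ F, ¬ X.Adj x y) (hB : B ⊆ F)
    (hD : IsCell X B D) (hDF : (D ∩ F).Nonempty) :
    vBdry X D = psiMap X F ψ '' vBdry X (psiMap X F ψ ⁻¹' D) :=
  calc vBdry X D = Subtype.val '' vBdry (reducedGraph X F) (Subtype.val ⁻¹' D) :=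
        (hD.image_vBdry_reducedGraph hF hB hDF).symm
    _ = Subtype.val '' (ψ '' (ψ ⁻¹' vBdry (reducedGraph X F) (Subtype.val ⁻¹' D))) := by
        rw [image_preimage_eq _ ψ.surjective]
    _ = psiMap X F ψ '' vBdry X (psiMap X F ψ ⁻¹' D) := by
        rw [← vBdry_preimage, ← image_comp]
        rfl

lemma vBdry_inter_Fiter_two_subsingleton (hF : ∀ x ∈ F, ∀ y ∈ F, ¬ X.Adj x y)
    (hE : IsCell X F E) : (vBdry X E ∩ Fiter X F ψ 2).Subsingleton := by
  rw [Fiter_succ, Fiter_one]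
  rintro _ ⟨hxE, a, ha, rfl⟩ _ ⟨hyE, b, hb, rfl⟩
  by_contra hab
  exact hF a ha b hb (ψ.map_adj_iff.1 ⟨fun h => hab (congrArg Subtype.val h), E, hE, hxE, hyE⟩)

lemma IsCell.vBdry_subsingleton_of_disjoint (hF : ∀ x ∈ F, ∀ y ∈ F, ¬ X.Adj x y) {m : ℕ}
    (hm : 2 ≤ m) (hD : IsCell X (Fiter X F ψ m) D) (hDF : Disjoint D F) :
    (vBdry X D).Subsingleton := by
  have hD₁ : IsCell X F D := hD.of_disjoint (Fiter_subset (by omega)) hDF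
  exact (vBdry_inter_Fiter_two_subsingleton hF hD₁).anti fun v hv =>
    ⟨hv, Fiter_antitone hm (hD.vBdry_subset hv)⟩

end SelfSimilar

namespace IsSelfSimilar

variable {X : SimpleGraph V} {F : Set V} {ψ : X ≃g reducedGraph X F} {C D : Set V} {m n : ℕ}

lemma vBdry_inter_Fiter_succ_subsingleton (hss : IsSelfSimilar X F ψ) (hm : 1 ≤ m)
    (hC : IsCell X (Fiter X F ψ m) C) : (vBdry X C ∩ Fiter X F ψ (m + 1)).Subsingleton := by
  induction m, hm using Nat.le_induction generalizing C with
  | base =>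
    rw [Fiter_one] at hC
    exact vBdry_inter_Fiter_two_subsingleton hss.f1 hC
  | succ m hm ih =>
    rcases disjoint_or_nonempty_inter C F with hCF | hCF
    · exact (hC.vBdry_subsingleton_of_disjoint hss.f1 (by omega) hCF).anti inter_subset_left
    rw [hC.vBdry_eq_image_psiMap hss.f1 (Fiter_subset (by omega)) hCF, Fiter_succ (m + 1),
      ← image_inter psiMap_injective]
    obtain ⟨_, hxC, x, rfl⟩ := range_psiMap (ψ := ψ) ▸ hCF
    exact (ih (hC.isCell_preimage_psiMap hss.f1 hxC)).image _

lemma vBdry_inter_subsingleton_of_ne (hss : IsSelfSimilar X F ψ) (hn : 1 ≤ n)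
    (hC : IsCell X (Fiter X F ψ n) C) (hD : IsCell X (Fiter X F ψ n) D) (hCD : C ≠ D) :
    (vBdry X C ∩ vBdry X D).Subsingleton := by
  induction n, hn using Nat.le_induction generalizing C D with
  | base =>
    rw [Fiter_one] at hC hD
    exact (hss.f2 C D hC hD hCD).anti (inter_subset_inter subset_union_right subset_union_right)
  | succ n hn ih =>
    rcases disjoint_or_nonempty_inter C F with hCF | hCF
    · exact (hC.vBdry_subsingleton_of_disjoint hss.f1 (by omega) hCF).anti inter_subset_left
    rcases disjoint_or_nonempty_inter D F with hDF | hDF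
    · exact (hD.vBdry_subsingleton_of_disjoint hss.f1 (by omega) hDF).anti inter_subset_right
    have hB := Fiter_subset (ψ := ψ) (Nat.succ_pos n)
    rw [hC.vBdry_eq_image_psiMap hss.f1 hB hCF, hD.vBdry_eq_image_psiMap hss.f1 hB hDF,
      ← image_inter psiMap_injective]
    obtain ⟨_, hxC, x, rfl⟩ := range_psiMap (ψ := ψ) ▸ hCF
    obtain ⟨_, hyD, y, rfl⟩ := range_psiMap (ψ := ψ) ▸ hDF
    refine (ih (hC.isCell_preimage_psiMap hss.f1 hxC) (hD.isCell_preimage_psiMap hss.f1 hyD)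
      fun hCD' => hCD (hC.eq_of_mem hD hxC ?_)).image _
    exact (hCD' ▸ hxC : x ∈ psiMap X F ψ ⁻¹' D)

lemma vBdry_inter_subsingleton_of_lt (hss : IsSelfSimilar X F ψ) (hmn : m < n)
    (hC : IsCell X (Fiter X F ψ m) C) (hD : IsCell X (Fiter X F ψ n) D) :
    (vBdry X C ∩ vBdry X D).Subsingleton := by
  obtain ⟨D₀, hD₀, hCD₀⟩ := hC.exists_superset (Fiter_antitone hmn.le)
  by_cases hD₀D : D₀ = D
  · subst hD₀D
    exact (hss.vBdry_inter_Fiter_succ_subsingleton hC.one_le hC).anti fun v hv =>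
      ⟨hv.1, Fiter_antitone hmn (hD₀.vBdry_subset hv.2)⟩
  · refine (hss.vBdry_inter_subsingleton_of_ne hD.one_le hD₀ hD hD₀D).anti fun v hv => ?_
    exact ⟨mem_vBdry_of_subset hCD₀ hv.1 (hD₀.notMem · (hD.vBdry_subset hv.2)), hv.2⟩

end IsSelfSimilar

theorem twocells_general (X : SimpleGraph V) (F : Set V) (ψ : X ≃g reducedGraph X F)
    (hss : IsSelfSimilar X F ψ) (m n : ℕ)
    (C D : Set V) (hC : IsCell X (Fiter X F ψ m) C) (hD : IsCell X (Fiter X F ψ n) D)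
    (hne : ¬ (m = n ∧ C = D)) :
    (vBdry X C ∩ vBdry X D).Subsingleton := by
  rcases lt_trichotomy m n with hmn | rfl | hnm
  · exact hss.vBdry_inter_subsingleton_of_lt hmn hC hD
  · exact hss.vBdry_inter_subsingleton_of_ne hC.one_le hC hD fun h => hne ⟨rfl, h⟩
  · rw [inter_comm]
    exact hss.vBdry_inter_subsingleton_of_lt hnm hD hC

/-- Lemma 2.2 (two cells): for an m-cell C and an n-cell D with (m,C) ≠ (n,D),
the boundaries intersect in at most one vertex. -/
theorem twocells (X : SimpleGraph V) [X.LocallyFinite] (hconn : X.Connected)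
    (hinf : Infinite V) (F : Set V) (ψ : X ≃g reducedGraph X F)
    (hss : IsSelfSimilar X F ψ) (m n : ℕ) (hm : 1 ≤ m) (hn : 1 ≤ n)
    (C D : Set V) (hC : IsCell X (Fiter X F ψ m) C) (hD : IsCell X (Fiter X F ψ n) D)
    (hne : ¬ (m = n ∧ C = D)) :
    (vBdry X C ∩ vBdry X D).Subsingleton :=
  twocells_general X F ψ hss m n C D hC hD hne
end

section
/- Let X be self-similar with respect to F with isomorphism ψ: X → X_F and φ = ψ^{-1}. Then for all vertices x, y in F, the graph distance in X satisfies d_X(x,y) ≥ 2 · d_X(φx, φy). -/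
open SimpleGraph Set

variable {V : Type*}

/-!
Cut a shortest path between two vertices of `F` at its visits to `F`. Since `F` is independent,
each piece between consecutive visits contains at least one vertex outside `F`, hence has length
at least two, and all its inner vertices lie in one cell; so its endpoints are adjacent (or equal)
in `X_F`. This gives `2 d_{X_F}(x, y) ≤ d_X(x, y)`, and `ψ` turns `d_{X_F}(x, y)` into
`d_X(φ x, φ y)`.
-/

namespace SimpleGraph

variable (X : SimpleGraph V) (F : Set V)

def cellOf (u : ↥Fᶜ) : Set V :=
  Subtype.val '' ((X.induce Fᶜ).connectedComponentMk u).supp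

theorem isCell_cellOf (u : ↥Fᶜ) : IsCell X F (X.cellOf F u) := ⟨u, rfl⟩

variable {X F}

theorem mem_cellOf_self (u : ↥Fᶜ) : (u : V) ∈ X.cellOf F u := ⟨u, rfl, rfl⟩

theorem notMem_cellOf_of_mem {a : V} (ha : a ∈ F) (u : ↥Fᶜ) : a ∉ X.cellOf F u := by
  rintro ⟨⟨w, hw⟩, -, rfl⟩
  exact hw ha

theorem cellOf_eq_of_adj {u v : ↥Fᶜ} (h : X.Adj u v) : X.cellOf F u = X.cellOf F v := by
  have hind : (X.induce Fᶜ).Adj u v := by simpa using h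
  rw [cellOf, cellOf, ConnectedComponent.eq.mpr hind.reachable]

theorem mem_vBdry_cellOf_of_adj {a : V} (ha : a ∈ F) {u : ↥Fᶜ} (h : X.Adj a u) :
    a ∈ vBdry X (X.cellOf F u) :=
  ⟨notMem_cellOf_of_mem ha u, u, mem_cellOf_self u, h⟩

/-- The statement for a walk starting at `u ∉ F` is what the induction needs: such a walk is the
tail of a walk from a vertex `a` on the boundary of the cell of `u`, one step longer. -/
theorem exists_reducedGraph_walk_two_mul_length_le (hF : ∀ x ∈ F, ∀ y ∈ F, ¬ X.Adj x y)
    {u y : V} (p : X.Walk u y) (hy : y ∈ F) :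
    (∀ hu : u ∈ F, ∃ q : (reducedGraph X F).Walk ⟨u, hu⟩ ⟨y, hy⟩,
      2 * q.length ≤ p.length) ∧
    (∀ (hu : u ∉ F) (a : V) (ha : a ∈ F), a ∈ vBdry X (X.cellOf F ⟨u, hu⟩) →
      ∃ q : (reducedGraph X F).Walk ⟨a, ha⟩ ⟨y, hy⟩, 2 * q.length ≤ p.length + 1) := by
  induction p with
  | nil => exact ⟨fun hu => ⟨.nil, by simp⟩, fun hu => absurd hy hu⟩
  | @cons u v y huv p ih =>
    obtain ⟨ih_mem, ih_not_mem⟩ := ih hy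
    refine ⟨fun hu => ?_, fun hu a ha haC => ?_⟩
    · have hv : v ∉ F := fun hv => hF u hu v hv huv
      obtain ⟨q, hq⟩ := ih_not_mem hv u hu (mem_vBdry_cellOf_of_adj hu (u := ⟨v, hv⟩) huv)
      exact ⟨q, by simpa using hq⟩
    by_cases hv : v ∈ F
    · obtain ⟨q, hq⟩ := ih_mem hv
      by_cases hav : a = v
      · subst hav
        exact ⟨q, by simp only [Walk.length_cons]; omega⟩
      have hadj : (reducedGraph X F).Adj ⟨a, ha⟩ ⟨v, hv⟩ :=
        ⟨fun h => hav (congrArg Subtype.val h), _, isCell_cellOf X F ⟨u, hu⟩, haC,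
          mem_vBdry_cellOf_of_adj hv (u := ⟨u, hu⟩) huv.symm⟩
      exact ⟨.cons hadj q, by simp only [Walk.length_cons]; omega⟩
    · rw [cellOf_eq_of_adj (u := ⟨u, hu⟩) (v := ⟨v, hv⟩) huv] at haC
      obtain ⟨q, hq⟩ := ih_not_mem hv a ha haC
      exact ⟨q, by simp only [Walk.length_cons]; omega⟩

theorem exists_reducedGraph_walk_two_mul_length_le_dist (hF : ∀ x ∈ F, ∀ y ∈ F, ¬ X.Adj x y)
    {x y : V} (hx : x ∈ F) (hy : y ∈ F) (hxy : X.Reachable x y) :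
    ∃ q : (reducedGraph X F).Walk ⟨x, hx⟩ ⟨y, hy⟩, 2 * q.length ≤ X.dist x y := by
  obtain ⟨p, hp⟩ := hxy.exists_walk_length_eq_dist
  exact hp ▸ (exists_reducedGraph_walk_two_mul_length_le hF p hy).1 hx

end SimpleGraph

theorem dist_contraction_general (X : SimpleGraph V) (hconn : X.Connected)
    (F : Set V) (ψ : X ≃g reducedGraph X F)
    (hss : IsSelfSimilar X F ψ) (x y : V) (hx : x ∈ F) (hy : y ∈ F) :
    X.dist x y ≥ 2 * X.dist (ψ.symm ⟨x, hx⟩) (ψ.symm ⟨y, hy⟩) := by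
  obtain ⟨q, hq⟩ := exists_reducedGraph_walk_two_mul_length_le_dist hss.f1 hx hy (hconn x y)
  calc 2 * X.dist (ψ.symm ⟨x, hx⟩) (ψ.symm ⟨y, hy⟩)
      ≤ 2 * (q.map ψ.symm.toHom).length := by gcongr; exact dist_le _
    _ = 2 * q.length := by rw [Walk.length_map]
    _ ≤ X.dist x y := hq

/-- For vertices x, y ∈ F one has d_X(x,y) ≥ 2·d_X(φx, φy), where φ = ψ⁻¹. -/
theorem dist_contraction (X : SimpleGraph V) [X.LocallyFinite] (hconn : X.Connected)
    (hinf : Infinite V) (F : Set V) (ψ : X ≃g reducedGraph X F)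
    (hss : IsSelfSimilar X F ψ) (x y : V) (hx : x ∈ F) (hy : y ∈ F) :
    X.dist x y ≥ 2 * X.dist (ψ.symm ⟨x, hx⟩) (ψ.symm ⟨y, hy⟩) :=
  dist_contraction_general X hconn F ψ hss x y hx hy
end
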